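/- Let n ≥ 1, let p, q be non-negative integers with p + q ≥ 1, and fix c ∈ (0, n+1). Then for every x > 0, the absolutely convergent integral w^{(p,q)}(x) := (1/2π) ∫_ℝ Γ(c+it)^p · Γ(1+n−c−it)^q · x^{−(c+it)} dt is a real number and w^{(p,q)}(x) > 0. -/

import Mathlib

open MeasureTheory Filter Set

noncomputable section

/-- Lebesgue measure on n×n complex matrices: product of Lebesgue measures of all
(real and imaginary parts of the) entries. -/
instance matrixMeasureSpace (n : ℕ) : MeasureSpace (Matrix (Fin n) (Fin n) ℂ) :=
  inferInstanceAs (MeasureSpace (Fin n → Fin n → ℂ))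

/-- Vandermonde product `Δ_n(a) = ∏_{j<k} (a k - a j)`. -/
def vdm {R : Type*} [CommRing R] {n : ℕ} (a : Fin n → R) : R :=
  ∏ j : Fin n, ∏ k ∈ Finset.Ioi j, (a k - a j)

/-- Squared singular values of `g`, i.e. the eigenvalues of `gᴴ * g`. -/
def sqSV {n : ℕ} (g : Matrix (Fin n) (Fin n) ℂ) : Fin n → ℝ :=
  (Matrix.isHermitian_conjTranspose_mul_self g).eigenvalues

/-- `f(ugv) = f(g)` for all unitary `u, v`. -/
def BiUnitarilyInvariant {n : ℕ} (f : Matrix (Fin n) (Fin n) ℂ → ℝ) : Prop :=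
  ∀ u ∈ Matrix.unitaryGroup (Fin n) ℂ, ∀ v ∈ Matrix.unitaryGroup (Fin n) ℂ,
    ∀ g : Matrix (Fin n) (Fin n) ℂ, f (u * g * v) = f g

/-- `f` has `ρ` as joint density of its squared singular values: for every bounded
measurable symmetric test function `φ` one has `∫ φ(λ(gᴴg)) f(g) dg = ∫_{(0,∞)^n} φ ρ`. -/
def HasSqSVDensity {n : ℕ} (f : Matrix (Fin n) (Fin n) ℂ → ℝ)
    (ρ : (Fin n → ℝ) → ℝ) : Prop :=
  ∀ φ : (Fin n → ℝ) → ℝ, Measurable φ → (∃ M, ∀ x, |φ x| ≤ M) →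
    (∀ σ : Equiv.Perm (Fin n), ∀ x, φ (x ∘ σ) = φ x) →
    ∫ g : Matrix (Fin n) (Fin n) ℂ, φ (sqSV g) * f g
      = ∫ a in {a : Fin n → ℝ | ∀ i, 0 < a i}, φ a * ρ a

/-- The Euler operator `ω ↦ (a ↦ -a * ω'(a))`. -/
def eulerOp (f : ℝ → ℝ) : ℝ → ℝ := fun a => -a * deriv f a

/-- Multiplicative convolution on `(0,∞)`, real-valued:
`(f ⊛ g)(x) = ∫_0^∞ f(x/y) g(y) dy/y`. -/
def mconvR (f g : ℝ → ℝ) (x : ℝ) : ℝ := ∫ y in Set.Ioi (0:ℝ), f (x / y) * g y / y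

/-- Multiplicative convolution on `(0,∞)`, complex-valued. -/
def mconvC (f g : ℝ → ℂ) (x : ℝ) : ℂ := ∫ y in Set.Ioi (0:ℝ), f (x / y) * g y / (y : ℂ)

/-- Multiplicative convolution of matrix densities:
`(f₁ ⊛ f₂)(g) = ∫_{det y ≠ 0} f₁(g y⁻¹) f₂(y) |det y|^{-2n} dy`. -/
def matConv {n : ℕ} (f₁ f₂ : Matrix (Fin n) (Fin n) ℂ → ℝ)
    (g : Matrix (Fin n) (Fin n) ℂ) : ℝ :=
  ∫ y in {y : Matrix (Fin n) (Fin n) ℂ | y.det ≠ 0},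
    f₁ (g * y⁻¹) * f₂ y / ‖y.det‖ ^ (2 * n)

/-- Complex power `x^w := exp(w ln x)` of a positive real. -/
def cpowP (x : ℝ) (w : ℂ) : ℂ := Complex.exp (w * Real.log x)

/-- The vector `ρ' = ((2j+n-1)/2)_{j=1..n}`. -/
def rhoV (n : ℕ) : Fin n → ℂ := fun j => (2 * ((j : ℕ) + 1) + (n : ℂ) - 1) / 2

/-- The spherical function of `GL(n, ℂ)`:
`φ_s(g) = (Δ(ρ')/Δ(s)) det[λ_j(gᴴg)^{s_k+(n-1)/2}] / Δ(λ(gᴴg))`. -/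
def sphericalFn {n : ℕ} (s : Fin n → ℂ) (g : Matrix (Fin n) (Fin n) ℂ) : ℂ :=
  vdm (rhoV n) / vdm s *
    Matrix.det (Matrix.of fun j k : Fin n => cpowP (sqSV g j) (s k + ((n : ℂ) - 1) / 2)) /
    vdm (fun j : Fin n => (sqSV g j : ℂ))

/-- Mellin transform `Mw(s) = ∫_0^∞ w(x) x^{s-1} dx` of a real function on `(0,∞)`. -/
def mellinR (w : ℝ → ℝ) (s : ℂ) : ℂ :=
  ∫ x in Set.Ioi (0:ℝ), (w x : ℂ) * cpowP x (s - 1)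

/-- Mellin transform of a complex function on `(0,∞)`. -/
def mellinCC (w : ℝ → ℂ) (s : ℂ) : ℂ :=
  ∫ x in Set.Ioi (0:ℝ), w x * cpowP x (s - 1)

/-- The interpolating weight `w^{(p,q)}(x)` for a fixed contour abscissa `c`. -/
def interpW (n : ℕ) (c : ℝ) (p q : ℕ) (x : ℝ) : ℂ :=
  (1 / (2 * (Real.pi : ℂ))) * ∫ t : ℝ,
    Complex.Gamma ((c : ℂ) + t * Complex.I) ^ p *
      Complex.Gamma (1 + (n : ℂ) - c - t * Complex.I) ^ q *
      cpowP x (-((c : ℂ) + t * Complex.I))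

/-!
For `b > 0`, `t ↦ Γ(b + it)` is the Fourier transform of the positive integrable function
`u ↦ 2π exp(-2πbu - e^{-2πu})` (Euler's integral after the substitution `x = e^{-2πu}`), and
`t ↦ Γ(b - it)` is that of its reflection. Since the Fourier transform turns convolution into
multiplication and convolutions of positive functions are positive,
`G(t) = Γ(c + it)^p Γ(n + 1 - c - it)^q` is the Fourier transform of a positive continuous
integrable `h`. Moreover `G` is integrable, because `‖Γ(b + it)‖ ≤ Γ(b + 2) / (b² + t²)` by the
functional equation, so Fourier inversion gives `w^{(p,q)}(x) = x^{-c} h(-log x / 2π) / 2π > 0`.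
-/

open scoped Real FourierTransform Convolution ComplexOrder
open Complex (I)

namespace Complex

theorem norm_Gamma_le_Gamma_re {s : ℂ} (hs : 0 < s.re) : ‖Gamma s‖ ≤ Real.Gamma s.re := by
  rw [Gamma_eq_integral hs, GammaIntegral, Real.Gamma_eq_integral hs]
  refine norm_integral_le_of_norm_le (Real.GammaIntegral_convergent hs) ?_
  filter_upwards [ae_restrict_mem measurableSet_Ioi] with x hx
  rw [norm_mul, norm_real, Real.norm_of_nonneg (Real.exp_pos _).le,
    norm_cpow_eq_rpow_re_of_pos hx]
  simp

theorem norm_Gamma_vertical_le {b : ℝ} (hb : 0 < b) (t : ℝ) :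
    ‖Gamma (b + t * I)‖ ≤ Real.Gamma b := by
  simpa using norm_Gamma_le_Gamma_re (s := b + t * I) (by simpa using hb)

theorem norm_Gamma_mul_sq_le {s : ℂ} (hs : 0 < s.re) :
    ‖Gamma s‖ * ‖s‖ ^ 2 ≤ Real.Gamma (s.re + 2) := by
  have hs₀ : s ≠ 0 := fun h => by simp [h] at hs
  have hs₁ : s + 1 ≠ 0 := fun h => by
    have := congrArg re h
    rw [add_re, one_re, zero_re] at this
    linarith
  have hle : ‖s‖ ≤ ‖s + 1‖ := by
    rw [← sq_le_sq₀ (norm_nonneg _) (norm_nonneg _), Complex.sq_norm, Complex.sq_norm, normSq_apply,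
      normSq_apply, add_re, one_re, add_im, one_im, add_zero]
    nlinarith
  calc ‖Gamma s‖ * ‖s‖ ^ 2 = ‖s‖ * (‖s‖ * ‖Gamma s‖) := by ring
    _ ≤ ‖s + 1‖ * (‖s‖ * ‖Gamma s‖) := by gcongr
    _ = ‖Gamma (s + 2)‖ := by
      rw [show s + 2 = s + 1 + 1 by ring, Gamma_add_one _ hs₁, Gamma_add_one _ hs₀, norm_mul,
        norm_mul]
    _ ≤ Real.Gamma (s.re + 2) := by
      simpa using norm_Gamma_le_Gamma_re (s := s + 2) (by simp; linarith)

theorem integrable_Gamma_vertical {b : ℝ} (hb : 0 < b) :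
    Integrable (fun t : ℝ => Gamma (b + t * I)) := by
  have hcont : Continuous (fun t : ℝ => Gamma (b + t * I)) := by
    refine continuous_iff_continuousAt.2 fun t => ?_
    refine ((differentiableAt_Gamma _ fun m h => ?_).continuousAt).comp (by fun_prop)
    have := congrArg re h
    simp only [add_re, ofReal_re, mul_re, I_re, mul_zero, ofReal_im, I_im, mul_one, sub_self,
      add_zero, neg_re, natCast_re] at this
    linarith [(Nat.cast_nonneg m : (0:ℝ) ≤ m)]
  set m := min (b ^ 2) 1
  have hm : 0 < m := lt_min (by positivity) one_pos
  refine (integrable_inv_one_add_sq.const_mul (Real.Gamma (b + 2) / m)).mono'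
    hcont.aestronglyMeasurable (ae_of_all _ fun t => ?_)
  have key := norm_Gamma_mul_sq_le (s := b + t * I) (by simpa using hb)
  rw [Complex.sq_norm, normSq_add_mul_I] at key
  simp only [add_re, ofReal_re, mul_re, I_re, mul_zero, ofReal_im, I_im, mul_one, sub_self,
    add_zero] at key
  have hmt : m * (1 + t ^ 2) ≤ b ^ 2 + t ^ 2 := by
    nlinarith [min_le_left (b ^ 2) 1, min_le_right (b ^ 2) 1, sq_nonneg t]
  rw [div_mul_eq_mul_div, le_div_iff₀ hm, ← div_eq_mul_inv, le_div_iff₀ (by positivity)]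
  nlinarith [norm_nonneg (Gamma (b + t * I))]

end Complex

section

variable {α 𝕜 : Type*} [MeasurableSpace α] {μ : Measure α} [NormedRing 𝕜] {f g : α → 𝕜}
  {M N : ℝ}

theorem MeasureTheory.Integrable.pow_of_norm_le (hf : Integrable f μ) (hM : ∀ x, ‖f x‖ ≤ M)
    {k : ℕ} (hk : 1 ≤ k) : Integrable (fun x => f x ^ k) μ := by
  induction k, hk using Nat.le_induction with
  | base => simpa using hf
  | succ k _ ih =>
    simp_rw [pow_succ']
    exact ih.bdd_mul hf.aestronglyMeasurable (ae_of_all _ hM)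

theorem MeasureTheory.Integrable.pow_mul_pow_of_norm_le [NormOneClass 𝕜] (hf : Integrable f μ)
    (hg : Integrable g μ) (hM : ∀ x, ‖f x‖ ≤ M) (hN : ∀ x, ‖g x‖ ≤ N) {p q : ℕ}
    (hpq : 1 ≤ p + q) : Integrable (fun x => f x ^ p * g x ^ q) μ := by
  rcases Nat.eq_zero_or_pos q with rfl | hq
  · simpa using hf.pow_of_norm_le hM hpq
  refine (hg.pow_of_norm_le hN hq).bdd_mul (c := M ^ p) (hf.aestronglyMeasurable.pow p)
    (ae_of_all _ fun x => ?_)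
  exact (norm_pow_le _ _).trans (pow_le_pow_left₀ (norm_nonneg _) (hM x) p)

end

theorem Real.fourier_comp_mul_left {E : Type*} [NormedAddCommGroup E] [NormedSpace ℂ E]
    (f : ℝ → E) {a : ℝ} (ha : a ≠ 0) (w : ℝ) :
    𝓕 (fun u => |a| • f (a * u)) w = 𝓕 f (w / a) := by
  simp only [Real.fourier_real_eq_integral_exp_smul]
  have h := Measure.integral_comp_mul_left
    (fun v => Complex.exp (↑(-2 * π * v * (w / a)) * I) • f v) a
  calc _ = |a| • ∫ u, Complex.exp (↑(-2 * π * (a * u) * (w / a)) * I) • f (a * u) := by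
        rw [← integral_smul]
        congr 1 with u
        rw [smul_comm]
        field_simp
    _ = _ := by rw [h, smul_smul, abs_inv, mul_inv_cancel₀ (abs_ne_zero.2 ha), one_smul]

theorem Real.fourier_ofReal_convolution {f g : ℝ → ℝ} (hf : Integrable f) (hg : Integrable g)
    (w : ℝ) :
    𝓕 (fun u => ((f ⋆[ContinuousLinearMap.mul ℝ ℝ] g) u : ℂ)) w =
      𝓕 (fun u => (f u : ℂ)) w * 𝓕 (fun u => (g u : ℂ)) w := by
  have h : (fun u => ((f ⋆[ContinuousLinearMap.mul ℝ ℝ] g) u : ℂ)) =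
      (fun u => (f u : ℂ)) ⋆[ContinuousLinearMap.mul ℂ ℂ] (fun u => (g u : ℂ)) := by
    ext u
    rw [convolution_mul, convolution_mul, ← integral_complex_ofReal]
    push_cast
    rfl
  rw [h]
  exact Real.fourier_mul_convolution_eq hf.ofReal hg.ofReal w

structure PositiveKernel (f : ℝ → ℝ) : Prop where
  integrable : Integrable f
  continuous : Continuous f
  bddAbove_norm : BddAbove (range fun u => ‖f u‖)
  pos : ∀ u, 0 < f u

namespace PositiveKernel

variable {f g : ℝ → ℝ}

theorem comp_mul_left (hf : PositiveKernel f) {a : ℝ} (ha : a ≠ 0) :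
    PositiveKernel (fun u => |a| * f (a * u)) where
  integrable := (hf.integrable.comp_mul_left' ha).const_mul _
  continuous := continuous_const.mul (hf.continuous.comp (continuous_const_mul a))
  bddAbove_norm := by
    obtain ⟨M, hM⟩ := hf.bddAbove_norm
    refine ⟨|a| * M, ?_⟩
    rintro _ ⟨u, rfl⟩
    dsimp only
    rw [norm_mul, Real.norm_eq_abs, abs_abs]
    exact mul_le_mul_of_nonneg_left (hM ⟨a * u, rfl⟩) (abs_nonneg a)
  pos u := mul_pos (abs_pos.2 ha) (hf.pos _)

theorem convolution (hf : PositiveKernel f) (hg : PositiveKernel g) :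
    PositiveKernel (f ⋆[ContinuousLinearMap.mul ℝ ℝ] g) := by
  obtain ⟨M, hM⟩ := hg.bddAbove_norm
  have hgM (u : ℝ) : ‖g u‖ ≤ M := hM ⟨u, rfl⟩
  have hint (x : ℝ) : Integrable (fun t => f t * g (x - t)) := by
    simpa only [mul_comm, Function.comp_def] using hf.integrable.bdd_mul
      (hg.continuous.comp (continuous_sub_left x)).aestronglyMeasurable
      (ae_of_all _ fun t => hgM _)
  refine ⟨hf.integrable.integrable_convolution _ hg.integrable,
    hg.bddAbove_norm.continuous_convolution_right_of_integrable _ hf.integrable hg.continuous,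
    ⟨(∫ t, ‖f t‖) * M, ?_⟩, fun x => ?_⟩
  · rintro _ ⟨x, rfl⟩
    dsimp only
    rw [convolution_mul, ← integral_mul_const]
    refine norm_integral_le_of_norm_le (hf.integrable.norm.mul_const M) (ae_of_all _ fun t => ?_)
    rw [norm_mul]
    exact mul_le_mul_of_nonneg_left (hgM _) (norm_nonneg _)
  · have hpos (t : ℝ) : 0 < f t * g (x - t) := mul_pos (hf.pos t) (hg.pos _)
    rw [convolution_mul, integral_pos_iff_support_of_nonneg (fun t => (hpos t).le) (hint x),
      Function.support_eq_univ fun t => (hpos t).ne']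
    simp

end PositiveKernel

def HasPositiveKernel (F : ℝ → ℂ) : Prop :=
  ∃ h : ℝ → ℝ, PositiveKernel h ∧ 𝓕 (fun u => (h u : ℂ)) = F

namespace HasPositiveKernel

variable {F G : ℝ → ℂ}

theorem comp_div (hF : HasPositiveKernel F) {a : ℝ} (ha : a ≠ 0) :
    HasPositiveKernel (fun w => F (w / a)) := by
  obtain ⟨h, hh, rfl⟩ := hF
  refine ⟨fun u => |a| * h (a * u), hh.comp_mul_left ha, funext fun w => ?_⟩
  simpa [← Complex.real_smul] using Real.fourier_comp_mul_left (fun u => (h u : ℂ)) ha w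

theorem mul (hF : HasPositiveKernel F) (hG : HasPositiveKernel G) :
    HasPositiveKernel (fun w => F w * G w) := by
  obtain ⟨f, hf, rfl⟩ := hF
  obtain ⟨g, hg, rfl⟩ := hG
  exact ⟨_, hf.convolution hg,
    funext (Real.fourier_ofReal_convolution hf.integrable hg.integrable)⟩

theorem pow (hF : HasPositiveKernel F) {k : ℕ} (hk : 1 ≤ k) :
    HasPositiveKernel (fun w => F w ^ k) := by
  induction k, hk using Nat.le_induction with
  | base => simpa using hF
  | succ k _ ih => simpa only [pow_succ] using ih.mul hF

theorem pow_mul_pow (hF : HasPositiveKernel F) (hG : HasPositiveKernel G) {p q : ℕ}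
    (hpq : 1 ≤ p + q) : HasPositiveKernel (fun w => F w ^ p * G w ^ q) := by
  rcases Nat.eq_zero_or_pos p with rfl | hp
  · simpa using hG.pow hpq
  rcases Nat.eq_zero_or_pos q with rfl | hq
  · simpa using hF.pow hp
  exact (hF.pow hp).mul (hG.pow hq)

theorem fourier_pos (hF : HasPositiveKernel F) (hFi : Integrable F) (w : ℝ) : 0 < 𝓕 F w := by
  obtain ⟨h, hh, rfl⟩ := hF
  have hinv : 𝓕⁻ (𝓕 fun u => (h u : ℂ)) = fun u => (h u : ℂ) :=
    (Complex.continuous_ofReal.comp hh.continuous).fourierInv_fourier_eq hh.integrable.ofReal hFi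
  rw [← neg_neg w, ← Real.fourierInv_eq_fourier_neg, hinv]
  exact Complex.zero_lt_real.2 (hh.pos _)

end HasPositiveKernel

def gammaKernel (b u : ℝ) : ℝ := Real.exp (-(b * u) - Real.exp (-u))

theorem gammaKernel_le_exp_neg_mul (b u : ℝ) : gammaKernel b u ≤ Real.exp (-b * u) := by
  rw [gammaKernel, Real.exp_le_exp]
  linarith [Real.exp_pos (-u)]

theorem gammaKernel_le {b : ℝ} (hb : 0 < b) (u : ℝ) :
    gammaKernel b u ≤ Real.exp (b * Real.log b - b) := by
  have h := Real.add_one_le_exp (-u - Real.log b)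
  rw [Real.exp_sub, Real.exp_log hb, le_div_iff₀ hb] at h
  rw [gammaKernel, Real.exp_le_exp]
  linarith

theorem positiveKernel_gammaKernel {b : ℝ} (hb : 0 < b) : PositiveKernel (gammaKernel b) := by
  have hcont : Continuous (gammaKernel b) := by unfold gammaKernel; fun_prop
  have hpos (u : ℝ) : 0 < gammaKernel b u := Real.exp_pos _
  have hnorm (u : ℝ) : ‖gammaKernel b u‖ = gammaKernel b u := Real.norm_of_nonneg (hpos u).le
  refine ⟨?_, hcont, ⟨_, forall_mem_range.2 fun u => (hnorm u).trans_le (gammaKernel_le hb u)⟩,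
    hpos⟩
  rw [← integrableOn_univ, ← Iic_union_Ioi (a := 0), integrableOn_union]
  constructor
  · refine ((integrableOn_exp_Iic 0).const_mul
      (Real.exp ((b + 1) * Real.log (b + 1) - (b + 1)))).mono' hcont.aestronglyMeasurable.restrict
      (ae_of_all _ fun u => ?_)
    have h : gammaKernel b u = gammaKernel (b + 1) u * Real.exp u := by
      rw [gammaKernel, gammaKernel, ← Real.exp_add]; ring_nf
    rw [hnorm, h]
    exact mul_le_mul_of_nonneg_right (gammaKernel_le (by linarith) u) (Real.exp_pos u).le
  · exact (exp_neg_integrableOn_Ioi 0 hb).mono' hcont.aestronglyMeasurable.restrict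
      (ae_of_all _ fun u => (hnorm u).trans_le (gammaKernel_le_exp_neg_mul b u))

theorem fourier_gammaKernel {s : ℂ} (hs : 0 < s.re) :
    𝓕 (fun u => (gammaKernel s.re u : ℂ)) (s.im / (2 * π)) = Complex.Gamma s := by
  have h : (fun u => (gammaKernel s.re u : ℂ)) =
      fun u => Real.exp (-s.re * u) • (Real.exp (-Real.exp (-u)) : ℂ) := by
    ext u
    rw [gammaKernel, Complex.real_smul, ← Complex.ofReal_mul, ← Real.exp_add]
    ring_nf
  rw [h, ← mellin_eq_fourier (fun x : ℝ => (Real.exp (-x) : ℂ)),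
    ← Complex.GammaIntegral_eq_mellin, Complex.Gamma_eq_integral hs]

theorem hasPositiveKernel_Gamma_vertical {b : ℝ} (hb : 0 < b) :
    HasPositiveKernel (fun t : ℝ => Complex.Gamma (b + t * I)) := by
  convert HasPositiveKernel.comp_div ⟨gammaKernel b, positiveKernel_gammaKernel hb, rfl⟩
    Real.two_pi_pos.ne' using 2 with t
  rw [← fourier_gammaKernel (by simpa using hb)]
  simp

theorem hasPositiveKernel_Gamma_pow_mul_pow {a b : ℝ} (ha : 0 < a) (hb : 0 < b) {p q : ℕ}
    (hpq : 1 ≤ p + q) : HasPositiveKernel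
      (fun t : ℝ => Complex.Gamma (a + t * I) ^ p * Complex.Gamma (b + (-t : ℝ) * I) ^ q) := by
  have hb' := (hasPositiveKernel_Gamma_vertical hb).comp_div (neg_ne_zero.2 one_ne_zero)
  simp only [div_neg, div_one] at hb'
  exact (hasPositiveKernel_Gamma_vertical ha).pow_mul_pow hb' hpq

theorem integrable_Gamma_pow_mul_pow {a b : ℝ} (ha : 0 < a) (hb : 0 < b) {p q : ℕ}
    (hpq : 1 ≤ p + q) : Integrable
      (fun t : ℝ => Complex.Gamma (a + t * I) ^ p * Complex.Gamma (b + (-t : ℝ) * I) ^ q) :=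
  (Complex.integrable_Gamma_vertical ha).pow_mul_pow_of_norm_le
    (Complex.integrable_Gamma_vertical hb).comp_neg (Complex.norm_Gamma_vertical_le ha)
    (fun t => Complex.norm_Gamma_vertical_le hb (-t)) hpq

theorem mul_cpowP_neg (z : ℂ) (c x t : ℝ) :
    z * cpowP x (-(c + t * I)) = Real.exp (-(c * Real.log x)) •
      (Complex.exp (↑(-2 * π * t * (Real.log x / (2 * π))) * I) • z) := by
  rw [cpowP, Complex.real_smul, smul_eq_mul, Complex.ofReal_exp, ← mul_assoc, ← Complex.exp_add,
    mul_comm z]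
  congr 2
  push_cast
  field_simp
  ring

theorem integrable_mul_cpowP {G : ℝ → ℂ} (hG : Integrable G) (c x : ℝ) :
    Integrable (fun t => G t * cpowP x (-(c + t * I))) := by
  simp_rw [mul_cpowP_neg, smul_eq_mul]
  have hcont : Continuous fun t : ℝ =>
      Complex.exp (↑(-2 * π * t * (Real.log x / (2 * π))) * I) := by fun_prop
  refine (hG.bdd_mul (c := 1) hcont.aestronglyMeasurable (ae_of_all _ fun t => ?_)).smul
    (Real.exp (-(c * Real.log x)))
  rw [Complex.norm_exp_ofReal_mul_I]

theorem integral_mul_cpowP (G : ℝ → ℂ) (c x : ℝ) :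
    ∫ t, G t * cpowP x (-(c + t * I)) =
      Real.exp (-(c * Real.log x)) • 𝓕 G (Real.log x / (2 * π)) := by
  simp_rw [mul_cpowP_neg, integral_smul, Real.fourier_real_eq_integral_exp_smul]

theorem interpW_pos_general
    (n : ℕ) (p q : ℕ) (hpq : 1 ≤ p + q)
    (c : ℝ) (hc : c ∈ Set.Ioo (0:ℝ) ((n:ℝ) + 1)) (x : ℝ) :
    Integrable (fun t : ℝ =>
      Complex.Gamma ((c : ℂ) + t * Complex.I) ^ p *
        Complex.Gamma (1 + (n : ℂ) - c - t * Complex.I) ^ q *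
        cpowP x (-((c : ℂ) + t * Complex.I))) ∧
    (interpW n c p q x).im = 0 ∧ 0 < (interpW n c p q x).re := by
  obtain ⟨hc₀, hc₁⟩ := hc
  have hb : 0 < (n : ℝ) + 1 - c := by linarith
  set G : ℝ → ℂ := fun t =>
    Complex.Gamma (c + t * I) ^ p * Complex.Gamma (((n : ℝ) + 1 - c : ℝ) + (-t : ℝ) * I) ^ q
  have hG : HasPositiveKernel G := hasPositiveKernel_Gamma_pow_mul_pow hc₀ hb hpq
  have hGi : Integrable G := integrable_Gamma_pow_mul_pow hc₀ hb hpq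
  have hintegrand : (fun t : ℝ => Complex.Gamma ((c : ℂ) + t * I) ^ p *
      Complex.Gamma (1 + (n : ℂ) - c - t * I) ^ q * cpowP x (-((c : ℂ) + t * I))) =
      fun t => G t * cpowP x (-(c + t * I)) := by
    ext t
    simp only [G]
    push_cast
    ring_nf
  have hW : interpW n c p q x =
      (1 / (2 * π) * Real.exp (-(c * Real.log x)) : ℝ) * 𝓕 G (Real.log x / (2 * π)) := by
    rw [interpW, hintegrand, integral_mul_cpowP, Complex.real_smul]
    push_cast
    ring
  have hpos : 0 < interpW n c p q x := by
    rw [hW]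
    exact mul_pos (Complex.zero_lt_real.2 (by positivity)) (hG.fourier_pos hGi _)
  exact ⟨hintegrand ▸ integrable_mul_cpowP hGi c x, (Complex.pos_iff.1 hpos).2.symm,
    (Complex.pos_iff.1 hpos).1⟩

/-- the interpolating weight is given by an absolutely convergent
integral and is a positive real number. -/
theorem interpW_pos
    (n : ℕ) (hn : 1 ≤ n) (p q : ℕ) (hpq : 1 ≤ p + q)
    (c : ℝ) (hc : c ∈ Set.Ioo (0:ℝ) ((n:ℝ) + 1)) (x : ℝ) (hx : 0 < x) :
    Integrable (fun t : ℝ =>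
      Complex.Gamma ((c : ℂ) + t * Complex.I) ^ p *
        Complex.Gamma (1 + (n : ℂ) - c - t * Complex.I) ^ q *
        cpowP x (-((c : ℂ) + t * Complex.I))) ∧
    (interpW n c p q x).im = 0 ∧ 0 < (interpW n c p q x).re :=
  interpW_pos_general n p q hpq c hc x
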